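/- arXiv:1608.02515 — 2 statements merged into one kernel-verified Lean document; each statement's English description precedes it below -/
import Mathlib

section
/- Let V be a finite set, let f : 2^V → ℤ be a skew-supermodular function, and let F be a finite multiset of edges on V (each edge an unordered pair of distinct vertices). Then the residual requirement function g : 2^V → ℤ defined by g(S) = f(S) − |δ_F(S)| is skew-supermodular. -/
/-
Subtracting a function that is both submodular and posimodular preserves each of the two
alternatives of skew-supermodularity, and every cut function `S ↦ |δ_F(S)|` is both, since a
single edge already is.
-/

open Finset

/-- Skew-supermodularity of an integer-valued set function. -/
def SkewSupermodular {V : Type*} [DecidableEq V] (f : Finset V → ℤ) : Prop :=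
  ∀ A B : Finset V,
    f A + f B ≤ f (A ∩ B) + f (A ∪ B) ∨ f A + f B ≤ f (A \ B) + f (B \ A)

/-- The cut value `|δ_F(S)|` of a multiset of edges, encoded as an indexed family of
edges with endpoint maps `a b : ι → V` (the index type `ι` accounts for multiplicity). -/
def edgeCut {V ι : Type*} [DecidableEq V] [Fintype ι] (a b : ι → V) (S : Finset V) : ℤ :=
  ((Finset.univ.filter (fun i => ¬((a i ∈ S) ↔ (b i ∈ S)))).card : ℤ)

theorem SkewSupermodular.sub {V : Type*} [DecidableEq V] {f c : Finset V → ℤ}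
    (hf : SkewSupermodular f)
    (hsub : ∀ A B, c (A ∩ B) + c (A ∪ B) ≤ c A + c B)
    (hpos : ∀ A B, c (A \ B) + c (B \ A) ≤ c A + c B) :
    SkewSupermodular (fun S => f S - c S) := by
  intro A B
  rcases hf A B with h | h
  · exact Or.inl (by linarith [hsub A B])
  · exact Or.inr (by linarith [hpos A B])

section edgeCut

variable {V ι : Type*} [DecidableEq V] [Fintype ι] (a b : ι → V)

theorem edgeCut_eq_sum (S : Finset V) :
    edgeCut a b S = ∑ i, if (a i ∈ S ↔ b i ∈ S) then 0 else 1 := by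
  simp only [edgeCut, card_filter, Nat.cast_sum, apply_ite Nat.cast, Nat.cast_one,
    Nat.cast_zero, ite_not]

theorem edgeCut_add_le_of_forall_edge {A B C D : Finset V}
    (h : ∀ u v : V,
      ((if (u ∈ A ↔ v ∈ A) then 0 else 1) + (if (u ∈ B ↔ v ∈ B) then 0 else 1) : ℤ) ≤
        (if (u ∈ C ↔ v ∈ C) then 0 else 1) + (if (u ∈ D ↔ v ∈ D) then 0 else 1)) :
    edgeCut a b A + edgeCut a b B ≤ edgeCut a b C + edgeCut a b D := by
  simp only [edgeCut_eq_sum, ← sum_add_distrib]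
  exact sum_le_sum fun i _ => h (a i) (b i)

theorem edgeCut_inter_add_edgeCut_union_le (A B : Finset V) :
    edgeCut a b (A ∩ B) + edgeCut a b (A ∪ B) ≤ edgeCut a b A + edgeCut a b B := by
  refine edgeCut_add_le_of_forall_edge a b fun u v => ?_
  simp only [mem_inter, mem_union]
  by_cases u ∈ A <;> by_cases u ∈ B <;> by_cases v ∈ A <;> by_cases v ∈ B <;> simp [*]

theorem edgeCut_sdiff_add_edgeCut_sdiff_le (A B : Finset V) :
    edgeCut a b (A \ B) + edgeCut a b (B \ A) ≤ edgeCut a b A + edgeCut a b B := by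
  refine edgeCut_add_le_of_forall_edge a b fun u v => ?_
  simp only [mem_sdiff]
  by_cases u ∈ A <;> by_cases u ∈ B <;> by_cases v ∈ A <;> by_cases v ∈ B <;> simp [*]

end edgeCut

theorem stmt4_general {V ι : Type*} [DecidableEq V] [Fintype ι]
    (f : Finset V → ℤ) (hf : SkewSupermodular f)
    (a b : ι → V) :
    SkewSupermodular (fun S => f S - edgeCut a b S) :=
  hf.sub (edgeCut_inter_add_edgeCut_union_le a b) (edgeCut_sdiff_add_edgeCut_sdiff_le a b)

/-- If `f` is skew-supermodular and `F` is a finite multiset of edges on `V`, then the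
residual requirement function `g(S) = f(S) - |δ_F(S)|` is skew-supermodular. -/
theorem stmt4 {V ι : Type*} [Fintype V] [DecidableEq V] [Fintype ι]
    (f : Finset V → ℤ) (hf : SkewSupermodular f)
    (a b : ι → V) (hab : ∀ i, a i ≠ b i) :
    SkewSupermodular (fun S => f S - edgeCut a b S) :=
  stmt4_general f hf a b
end

section
/- Let V be a finite set, E a finite multiset of edges on V (each edge an unordered pair of distinct vertices), and let f : 2^V → ℤ be a skew-supermodular function. Let x̄ be an extreme point of the polytope P = { x ∈ ℝ^E : 0 ≤ x_e ≤ 1 for all e ∈ E, and Σ_{e ∈ δ(S)} x_e ≥ f(S) for all S ⊆ V }, and suppose x̄ is fully fractional, i.e., 0 < x̄_e < 1 for all e ∈ E. Then there exists a laminar family L of nonempty proper subsets of V such that: (i) x̄(δ(S)) = f(S) for every S ∈ L; (ii) |L| = |E|; (iii) the characteristic vectors χ(δ(S)), S ∈ L, are linearly independent in ℝ^E; and (iv) x̄ is the unique solution of the linear system { x(δ(S)) = f(S) : S ∈ L }. -/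
/-!
At a strictly positive feasible point, tight sets can be uncrossed: by skew-supermodularity,
for tight `A, B` either `A ∩ B, A ∪ B` or `A \ B, B \ A` are tight as well, and positivity of `x`
forces `χ(δ A) + χ(δ B)` to equal the sum of the cut vectors of the new pair. Among laminar
families of tight sets with independent cut vectors take one of maximum size; induction on the
number of its members that a tight set crosses shows that its cut vectors span those of all tight
sets. At a fully fractional extreme point the tight cut vectors span `ℝ^E`, because a direction
orthogonal to all of them could be followed a little both ways inside the polytope. So the family
is a basis of `ℝ^E`, which gives its size and the uniqueness of the solution.
-/

open Finset

/-- `δ(T)`: the indices of edges with exactly one endpoint in `T`. Edges are given as an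
indexed family with endpoint maps `a b : ι → V`. -/
def cutEdges {V ι : Type*} [DecidableEq V] [Fintype ι] (a b : ι → V) (T : Finset V) :
    Finset ι :=
  Finset.univ.filter (fun i => ¬((a i ∈ T) ↔ (b i ∈ T)))

/-- `x(δ(T)) = Σ_{e ∈ δ(T)} x_e`. -/
def xCut {V ι : Type*} [DecidableEq V] [Fintype ι] (a b : ι → V) (x : ι → ℝ)
    (T : Finset V) : ℝ :=
  ∑ i ∈ cutEdges a b T, x i

/-- `χ(δ(T)) ∈ {0,1}^E`, the characteristic vector of `δ(T)`. -/
def chiCut {V ι : Type*} [DecidableEq V] [Fintype ι] [DecidableEq ι] (a b : ι → V)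
    (T : Finset V) : ι → ℝ :=
  fun i => if i ∈ cutEdges a b T then 1 else 0

open Matrix Filter Topology

section Laminar

variable {V : Type*}

def Crosses (S T : Finset V) : Prop := ¬(Disjoint S T ∨ S ⊆ T ∨ T ⊆ S)

instance [DecidableEq V] (S : Finset V) : DecidablePred (Crosses S) := fun T =>
  inferInstanceAs (Decidable ¬(Disjoint S T ∨ S ⊆ T ∨ T ⊆ S))

def IsLaminar (L : Finset (Finset V)) : Prop := ∀ S ∈ L, ∀ T ∈ L, ¬Crosses S T

def uncrossings [DecidableEq V] (S T : Finset V) : Set (Finset V) :=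
  {S ∩ T, S ∪ T, S \ T, T \ S}

theorem Crosses.symm {S T : Finset V} (h : Crosses S T) : Crosses T S := by
  rintro (hd | hsub | hsup)
  exacts [h (Or.inl hd.symm), h (Or.inr (Or.inr hsub)), h (Or.inr (Or.inl hsup))]

theorem not_crosses_self (S : Finset V) : ¬Crosses S S :=
  fun h => h (Or.inr (Or.inl subset_rfl))

theorem IsLaminar.insert [DecidableEq V] {L : Finset (Finset V)} {S : Finset V} (hL : IsLaminar L)
    (hS : ∀ T ∈ L, ¬Crosses S T) : IsLaminar (insert S L) := by
  simp only [IsLaminar, Finset.mem_insert, forall_eq_or_imp]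
  exact ⟨⟨not_crosses_self S, hS⟩, fun T hT =>
    ⟨fun h => hS T hT h.symm, hL T hT⟩⟩

section Uncross

variable [DecidableEq V] {S T T' : Finset V}

theorem Crosses.of_inter_left (h : Crosses (S ∩ T) T') (hT' : Disjoint T' T ∨ T' ⊆ T ∨ T ⊆ T')
    (hST : Crosses S T) : Crosses S T' := by
  rintro (hd | hsub | hsup)
  · exact h (Or.inl (hd.mono_left inter_subset_left))
  · exact h (Or.inr (Or.inl (inter_subset_left.trans hsub)))
  · rcases hT' with hd' | hs' | hs''
    · exact h (Or.inl (hd'.symm.mono_left inter_subset_right))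
    · exact h (Or.inr (Or.inr (subset_inter hsup hs')))
    · exact hST (Or.inr (Or.inr (hs''.trans hsup)))

theorem Crosses.of_union_left (h : Crosses (S ∪ T) T') (hT' : Disjoint T' T ∨ T' ⊆ T ∨ T ⊆ T')
    (hST : Crosses S T) : Crosses S T' := by
  rintro (hd | hsub | hsup)
  · rcases hT' with hd' | hs' | hs''
    · exact h (Or.inl (disjoint_union_left.2 ⟨hd, hd'.symm⟩))
    · exact h (Or.inr (Or.inr (hs'.trans subset_union_right)))
    · exact hST (Or.inl (hd.mono_right hs''))
  · rcases hT' with hd' | hs' | hs''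
    · exact hST (Or.inl (hd'.mono_left hsub))
    · exact hST (Or.inr (Or.inl (hsub.trans hs')))
    · exact h (Or.inr (Or.inl (union_subset hsub hs'')))
  · exact h (Or.inr (Or.inr (hsup.trans subset_union_left)))

theorem Crosses.of_sdiff_left (h : Crosses (S \ T) T') (hT' : Disjoint T' T ∨ T' ⊆ T ∨ T ⊆ T')
    (hST : Crosses S T) : Crosses S T' := by
  rintro (hd | hsub | hsup)
  · exact h (Or.inl (hd.mono_left sdiff_subset))
  · exact h (Or.inr (Or.inl (sdiff_subset.trans hsub)))
  · rcases hT' with hd' | hs' | hs''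
    · exact h (Or.inr (Or.inr (subset_sdiff.2 ⟨hsup, hd'⟩)))
    · exact h (Or.inl (sdiff_disjoint.mono_right hs'))
    · exact hST (Or.inr (Or.inr (hs''.trans hsup)))

theorem Crosses.of_sdiff_right (h : Crosses (T \ S) T') (hT' : Disjoint T' T ∨ T' ⊆ T ∨ T ⊆ T')
    (hST : Crosses S T) : Crosses S T' := by
  rintro (hd | hsub | hsup)
  · rcases hT' with hd' | hs' | hs''
    · exact h (Or.inl (hd'.symm.mono_left sdiff_subset))
    · exact h (Or.inr (Or.inr (subset_sdiff.2 ⟨hs', hd.symm⟩)))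
    · exact hST (Or.inl (hd.mono_right hs''))
  · rcases hT' with hd' | hs' | hs''
    · exact hST (Or.inl (hd'.mono_left hsub))
    · exact hST (Or.inr (Or.inl (hsub.trans hs')))
    · exact h (Or.inr (Or.inl (sdiff_subset.trans hs'')))
  · exact h (Or.inl (sdiff_disjoint.mono_right hsup))

end Uncross

theorem card_filter_crosses_lt [DecidableEq V] {L : Finset (Finset V)} (hL : IsLaminar L)
    {S T C : Finset V} (hT : T ∈ L) (hST : Crosses S T) (hC : C ∈ uncrossings S T) :
    #(L.filter (Crosses C)) < #(L.filter (Crosses S)) := by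
  have hCT : ¬Crosses C T := by
    rcases hC with rfl | rfl | rfl | rfl
    exacts [fun h => h (Or.inr (Or.inl inter_subset_right)),
      fun h => h (Or.inr (Or.inr subset_union_right)), fun h => h (Or.inl sdiff_disjoint),
      fun h => h (Or.inr (Or.inl sdiff_subset))]
  have hmono : ∀ T' ∈ L, Crosses C T' → Crosses S T' := by
    intro T' hT' hCT'
    have hrel := not_not.1 (hL T' hT' T hT)
    rcases hC with rfl | rfl | rfl | rfl
    exacts [hCT'.of_inter_left hrel hST, hCT'.of_union_left hrel hST,
      hCT'.of_sdiff_left hrel hST, hCT'.of_sdiff_right hrel hST]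
  refine card_lt_card ⟨fun T' hT' => ?_, fun hsub => ?_⟩
  · rw [mem_filter] at hT' ⊢
    exact ⟨hT'.1, hmono T' hT'.1 hT'.2⟩
  · exact hCT (mem_filter.1 (hsub (mem_filter.2 ⟨hT, hST⟩))).2

end Laminar

section LinearAlgebra

variable {ι : Type*} [Fintype ι]

theorem eq_of_le_of_dotProduct_le {u v x : ι → ℝ} (hx : ∀ i, 0 < x i) (huv : u ≤ v)
    (h : v ⬝ᵥ x ≤ u ⬝ᵥ x) : u = v := by
  have hle : ∀ i ∈ univ, u i * x i ≤ v i * x i := fun i _ =>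
    mul_le_mul_of_nonneg_right (huv i) (hx i).le
  have heq := (sum_eq_sum_iff_of_le hle).1 (le_antisymm (sum_le_sum hle) h)
  funext i
  exact mul_right_cancel₀ (hx i).ne' (heq i (mem_univ i))

theorem dotProduct_eq_zero_of_mem_span {s : Set (ι → ℝ)} {v d : ι → ℝ}
    (hv : v ∈ Submodule.span ℝ s) (h : ∀ w ∈ s, w ⬝ᵥ d = 0) : v ⬝ᵥ d = 0 := by
  induction hv using Submodule.span_induction with
  | mem w hw => exact h w hw
  | zero => exact zero_dotProduct d
  | add u w _ _ hu hw => rw [add_dotProduct, hu, hw, add_zero]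
  | smul c w _ hw => rw [smul_dotProduct, hw, smul_zero]

theorem span_eq_top_of_forall_dotProduct_eq_zero [DecidableEq ι] {s : Set (ι → ℝ)}
    (h : ∀ d : ι → ℝ, (∀ v ∈ s, v ⬝ᵥ d = 0) → d = 0) : Submodule.span ℝ s = ⊤ := by
  rw [← Submodule.dualAnnihilator_eq_bot_iff, Submodule.eq_bot_iff]
  intro φ hφ
  rw [Submodule.mem_dualAnnihilator] at hφ
  obtain ⟨d, rfl⟩ := (dotProductEquiv ℝ ι).surjective φ
  rw [h d fun v hv => by simpa [dotProduct_comm] using hφ v (Submodule.subset_span hv), map_zero]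

theorem eq_zero_of_add_mem_of_sub_mem_of_mem_extremePoints {𝕜 E : Type*} [Field 𝕜]
    [LinearOrder 𝕜] [IsStrictOrderedRing 𝕜] [AddCommGroup E] [Module 𝕜 E] {A : Set E} {x v : E}
    (hx : x ∈ A.extremePoints 𝕜) (hadd : x + v ∈ A) (hsub : x - v ∈ A) : v = 0 := by
  have hseg : x ∈ openSegment 𝕜 (x + v) (x - v) :=
    ⟨1 / 2, 1 / 2, by norm_num, by norm_num, by norm_num, by module⟩
  simpa using ((mem_extremePoints.1 hx).2 _ hadd _ hsub hseg).1

end LinearAlgebra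

section Cuts

variable {V ι : Type*} [DecidableEq V] [Fintype ι] [DecidableEq ι] (a b : ι → V)

theorem xCut_eq_dotProduct (x : ι → ℝ) (T : Finset V) :
    xCut a b x T = chiCut a b T ⬝ᵥ x := by
  simp [xCut, chiCut, dotProduct, sum_ite_mem]

theorem chiCut_eq_zero_of_mem_cut_iff {T : Finset V} (h : ∀ i, a i ∈ T ↔ b i ∈ T) :
    chiCut a b T = 0 := by
  funext i
  simp [chiCut, cutEdges, h i]

theorem chiCut_inter_add_chiCut_union_le (A B : Finset V) :
    chiCut a b (A ∩ B) + chiCut a b (A ∪ B) ≤ chiCut a b A + chiCut a b B := by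
  intro i
  simp only [Pi.add_apply, chiCut, cutEdges, mem_filter, mem_univ, true_and, mem_inter, mem_union]
  by_cases a i ∈ A <;> by_cases a i ∈ B <;> by_cases b i ∈ A <;> by_cases b i ∈ B <;>
    simp_all

theorem chiCut_sdiff_add_chiCut_sdiff_le (A B : Finset V) :
    chiCut a b (A \ B) + chiCut a b (B \ A) ≤ chiCut a b A + chiCut a b B := by
  intro i
  simp only [Pi.add_apply, chiCut, cutEdges, mem_filter, mem_univ, true_and]
  by_cases a i ∈ A <;> by_cases a i ∈ B <;> by_cases b i ∈ A <;> by_cases b i ∈ B <;>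
    simp_all

end Cuts

section Uncrossing

variable {V ι : Type*} [DecidableEq V] [Fintype ι] [DecidableEq ι] (a b : ι → V)
  (f : Finset V → ℤ) {x : ι → ℝ}

theorem uncross_of_chiCut_add_le (hx : ∀ i, 0 < x i) (hfeas : ∀ S, (f S : ℝ) ≤ xCut a b x S)
    {A B C D : Finset V} (hA : xCut a b x A = f A) (hB : xCut a b x B = f B)
    (hχ : chiCut a b C + chiCut a b D ≤ chiCut a b A + chiCut a b B)
    (hf : f A + f B ≤ f C + f D) :
    xCut a b x C = f C ∧ xCut a b x D = f D ∧
      chiCut a b A + chiCut a b B = chiCut a b C + chiCut a b D := by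
  have hfR : (f A : ℝ) + f B ≤ f C + f D := by exact_mod_cast hf
  have hsum := dotProduct_le_dotProduct_of_nonneg_right hχ fun i => (hx i).le
  simp only [add_dotProduct, ← xCut_eq_dotProduct] at hsum
  have hC := hfeas C
  have hD := hfeas D
  refine ⟨by linarith, by linarith, (eq_of_le_of_dotProduct_le hx hχ ?_).symm⟩
  simp only [add_dotProduct, ← xCut_eq_dotProduct]
  linarith

theorem exists_tight_uncross (hf : SkewSupermodular f) (hx : ∀ i, 0 < x i)
    (hfeas : ∀ S, (f S : ℝ) ≤ xCut a b x S) {A B : Finset V}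
    (hA : xCut a b x A = f A) (hB : xCut a b x B = f B) :
    ∃ C ∈ uncrossings A B, ∃ D ∈ uncrossings A B,
      xCut a b x C = f C ∧ xCut a b x D = f D ∧
        chiCut a b A + chiCut a b B = chiCut a b C + chiCut a b D := by
  rcases hf A B with h | h
  · exact ⟨_, by simp [uncrossings], _, by simp [uncrossings],
      uncross_of_chiCut_add_le a b f hx hfeas hA hB (chiCut_inter_add_chiCut_union_le a b A B) h⟩
  · exact ⟨_, by simp [uncrossings], _, by simp [uncrossings],
      uncross_of_chiCut_add_le a b f hx hfeas hA hB (chiCut_sdiff_add_chiCut_sdiff_le a b A B) h⟩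

theorem chiCut_mem_span_of_isLaminar (hf : SkewSupermodular f) (hx : ∀ i, 0 < x i)
    (hfeas : ∀ S, (f S : ℝ) ≤ xCut a b x S) {L : Finset (Finset V)} (hL : IsLaminar L)
    (hLtight : ∀ T ∈ L, xCut a b x T = f T)
    (hbase : ∀ S, xCut a b x S = f S → (∀ T ∈ L, ¬Crosses S T) →
      chiCut a b S ∈ Submodule.span ℝ (chiCut a b '' L))
    (S : Finset V) (hS : xCut a b x S = f S) :
    chiCut a b S ∈ Submodule.span ℝ (chiCut a b '' L) := by
  induction hn : #(L.filter (Crosses S)) using Nat.strong_induction_on generalizing S with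
  | _ n ih =>
    by_cases hcross : ∃ T ∈ L, Crosses S T
    · obtain ⟨T, hT, hST⟩ := hcross
      obtain ⟨C, hC, D, hD, hCtight, hDtight, hχ⟩ :=
        exists_tight_uncross a b f hf hx hfeas hS (hLtight T hT)
      have hχS : chiCut a b S = chiCut a b C + chiCut a b D - chiCut a b T :=
        eq_sub_of_add_eq hχ
      rw [hχS]
      refine sub_mem (add_mem ?_ ?_) (Submodule.subset_span ⟨T, hT, rfl⟩)
      · exact ih _ (hn ▸ card_filter_crosses_lt hL hT hST hC) C hCtight rfl
      · exact ih _ (hn ▸ card_filter_crosses_lt hL hT hST hD) D hDtight rfl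
    · push Not at hcross
      exact hbase S hS hcross

theorem exists_isLaminar_linearIndepOn_span_tight [Fintype V] (hf : SkewSupermodular f)
    (hx : ∀ i, 0 < x i) (hfeas : ∀ S, (f S : ℝ) ≤ xCut a b x S) :
    ∃ L : Finset (Finset V), IsLaminar L ∧ (∀ T ∈ L, xCut a b x T = f T) ∧
      LinearIndepOn ℝ (chiCut a b) (L : Set (Finset V)) ∧
      ∀ S, xCut a b x S = f S → chiCut a b S ∈ Submodule.span ℝ (chiCut a b '' L) := by
  classical
  let good : Finset (Finset V) → Prop := fun L => IsLaminar L ∧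
    (∀ T ∈ L, xCut a b x T = f T) ∧ LinearIndepOn ℝ (chiCut a b) (L : Set (Finset V))
  obtain ⟨L, hLmem, hLmax⟩ := exists_max_image (univ.filter good) card
    ⟨∅, mem_filter.2 ⟨mem_univ _, by simp [good, IsLaminar]⟩⟩
  obtain ⟨hL, hLtight, hLind⟩ := (mem_filter.1 hLmem).2
  refine ⟨L, hL, hLtight, hLind, chiCut_mem_span_of_isLaminar a b f hf hx hfeas hL hLtight ?_⟩
  intro S hS hnc
  by_contra hspan
  have hSL : S ∉ L := fun h => hspan (Submodule.subset_span ⟨S, h, rfl⟩)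
  have hgood : good (insert S L) :=
    ⟨hL.insert hnc, (forall_mem_insert _ _ _).2 ⟨hS, hLtight⟩, by
      rw [coe_insert]; exact hLind.insert hspan⟩
  have := hLmax _ (mem_filter.2 ⟨mem_univ _, hgood⟩)
  rw [card_insert_of_notMem hSL] at this
  omega

end Uncrossing

section ExtremePoints

variable {V ι : Type*} [DecidableEq V] [Fintype ι] [DecidableEq ι] (a b : ι → V)
  (f : Finset V → ℤ)

def coverPolytope : Set (ι → ℝ) :=
  {x | (∀ i, 0 ≤ x i ∧ x i ≤ 1) ∧ ∀ S : Finset V, (f S : ℝ) ≤ xCut a b x S}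

theorem eq_zero_of_forall_tight_dotProduct_eq_zero [Fintype V] {x d : ι → ℝ}
    (hx : x ∈ (coverPolytope a b f).extremePoints ℝ) (hfrac : ∀ i, 0 < x i ∧ x i < 1)
    (hd : ∀ S, xCut a b x S = f S → chiCut a b S ⬝ᵥ d = 0) : d = 0 := by
  have hline : ∀ S (t : ℝ), xCut a b (x + t • d) S = xCut a b x S + t * (chiCut a b S ⬝ᵥ d) := by
    intro S t
    simp only [xCut_eq_dotProduct, dotProduct_add, dotProduct_smul, smul_eq_mul]
  have hperturb : ∀ᶠ t in 𝓝 (0 : ℝ), x + t • d ∈ coverPolytope a b f := by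
    refine (eventually_all.2 fun i => ?_).and (eventually_all.2 fun S => ?_)
    · have hcont : Continuous fun t : ℝ => x i + t * d i := by fun_prop
      filter_upwards [hcont.continuousAt.eventually_mem
        (isOpen_Ioo.mem_nhds (by simpa using hfrac i))] with t ht
      exact ⟨ht.1.le, ht.2.le⟩
    · simp only [hline]
      rcases (hx.1.2 S).eq_or_lt with htight | hslack
      · filter_upwards with t
        rw [hd S htight.symm, mul_zero, add_zero]
        exact htight.le
      · have hcont : Continuous fun t : ℝ => xCut a b x S + t * (chiCut a b S ⬝ᵥ d) := by
          fun_prop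
        exact (hcont.continuousAt.eventually (lt_mem_nhds (by simpa using hslack))).mono
          fun t ht => ht.le
  obtain ⟨ε, hε, hplus, hminus⟩ :=
    (hperturb.and ((continuous_neg.tendsto' 0 0 neg_zero).eventually hperturb)).exists_gt
  have hεd := eq_zero_of_add_mem_of_sub_mem_of_mem_extremePoints hx hplus
    (by simpa [sub_eq_add_neg] using hminus)
  exact (smul_eq_zero.1 hεd).resolve_left hε.ne'

end ExtremePoints

theorem stmt13_general {V ι : Type*} [Fintype V] [DecidableEq V] [Fintype ι] [DecidableEq ι]
    (a b : ι → V)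
    (f : Finset V → ℤ) (hf : SkewSupermodular f)
    (P : Set (ι → ℝ))
    (hP : P = {x : ι → ℝ | (∀ i, 0 ≤ x i ∧ x i ≤ 1) ∧
      ∀ S : Finset V, (f S : ℝ) ≤ ∑ i ∈ cutEdges a b S, x i})
    (xbar : ι → ℝ) (hxbar : xbar ∈ Set.extremePoints ℝ P)
    (hfrac : ∀ i, 0 < xbar i ∧ xbar i < 1) :
    ∃ L : Finset (Finset V),
      (∀ S ∈ L, S.Nonempty ∧ S ≠ Finset.univ) ∧
      (∀ S ∈ L, ∀ T ∈ L, Disjoint S T ∨ S ⊆ T ∨ T ⊆ S) ∧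
      (∀ S ∈ L, xCut a b xbar S = f S) ∧
      L.card = Fintype.card ι ∧
      LinearIndependent ℝ (fun S : {T // T ∈ L} => chiCut a b S.val) ∧
      (∀ y : ι → ℝ, (∀ S ∈ L, xCut a b y S = f S) → y = xbar) := by
  subst hP
  obtain ⟨L, hL, hLtight, hLind, hLspan⟩ :=
    exists_isLaminar_linearIndepOn_span_tight a b f hf (fun i => (hfrac i).1) hxbar.1.2
  have horth : ∀ d, (∀ S ∈ L, chiCut a b S ⬝ᵥ d = 0) → d = 0 := fun d hd =>
    eq_zero_of_forall_tight_dotProduct_eq_zero a b f hxbar hfrac fun S hS =>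
      dotProduct_eq_zero_of_mem_span (hLspan S hS) (by rintro _ ⟨T, hT, rfl⟩; exact hd T hT)
  have htop : Submodule.span ℝ (chiCut a b '' L) = ⊤ :=
    span_eq_top_of_forall_dotProduct_eq_zero fun d hd => horth d fun S hS => hd _ ⟨S, hS, rfl⟩
  refine ⟨L, fun S hS => ?_, fun S hS T hT => not_not.1 (hL S hS T hT), hLtight, ?_, hLind,
    fun y hy => sub_eq_zero.1 (horth (y - xbar) fun S hS => ?_)⟩
  · have hne := hLind.ne_zero hS
    refine ⟨nonempty_iff_ne_empty.2 ?_, ?_⟩ <;> rintro rfl <;>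
      exact hne (chiCut_eq_zero_of_mem_cut_iff a b (by simp))
  · have hcard := linearIndependent_iff_card_eq_finrank_span.1 hLind
    rw [Set.finrank, ← Set.image_eq_range, htop, finrank_top,
      Module.finrank_fintype_fun_eq_card] at hcard
    simpa using hcard
  · rw [dotProduct_sub, ← xCut_eq_dotProduct, ← xCut_eq_dotProduct, hy S hS, hLtight S hS,
      sub_self]

/-- Characterization of fully fractional basic feasible solutions: a fully fractional
extreme point of the covering LP is determined by a laminar family of tight sets. -/
theorem stmt13 {V ι : Type*} [Fintype V] [DecidableEq V] [Fintype ι] [DecidableEq ι]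
    (a b : ι → V) (hab : ∀ i, a i ≠ b i)
    (f : Finset V → ℤ) (hf : SkewSupermodular f)
    (P : Set (ι → ℝ))
    (hP : P = {x : ι → ℝ | (∀ i, 0 ≤ x i ∧ x i ≤ 1) ∧
      ∀ S : Finset V, (f S : ℝ) ≤ ∑ i ∈ cutEdges a b S, x i})
    (xbar : ι → ℝ) (hxbar : xbar ∈ Set.extremePoints ℝ P)
    (hfrac : ∀ i, 0 < xbar i ∧ xbar i < 1) :
    ∃ L : Finset (Finset V),
      (∀ S ∈ L, S.Nonempty ∧ S ≠ Finset.univ) ∧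
      (∀ S ∈ L, ∀ T ∈ L, Disjoint S T ∨ S ⊆ T ∨ T ⊆ S) ∧
      (∀ S ∈ L, xCut a b xbar S = f S) ∧
      L.card = Fintype.card ι ∧
      LinearIndependent ℝ (fun S : {T // T ∈ L} => chiCut a b S.val) ∧
      (∀ y : ι → ℝ, (∀ S ∈ L, xCut a b y S = f S) → y = xbar) :=
  stmt13_general a b f hf P hP xbar hxbar hfrac
end
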